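/- arXiv:1905.07703 — 4 statements merged into one kernel-verified Lean document; each statement's English description precedes it below -/
import Mathlib

section
/- Fix ε ∈ (0,1/3) and K > 0, and let (λ_k)_{k≥1} have the Airy-eigenvalue property with constant K. Then there exist positive constants S₀ and R (depending only on ε and K) such that for every s ≥ S₀, every T ≥ 0, and every sequence (a_k)_{k≥1} of real numbers, setting θ₀ := ⌊2 s^{3/2}/(3π)⌋ and D_k := max(−λ_k − a_k, 0), the sum Σ_{k=1}^∞ J_s(a_k) (a sum of nonnegative terms, valued in [0,∞]) satisfies Σ_{k=1}^∞ J_s(a_k) ≥ (1/2)·T^{1/3}·( (4 s^{5/2}/(15π))·(1 − 8ε) − Σ_{k=1}^{θ₀} D_k − R ). -/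
open scoped ENNReal

set_option maxHeartbeats 1000000

/-- `J T s x = (1/2)·log(1 + exp(T^{1/3}·(x+s)))`. -/
noncomputable def J (T s x : ℝ) : ℝ :=
  (1/2) * Real.log (1 + Real.exp (T ^ ((1:ℝ)/3) * (x + s)))

/-- A sequence of positive reals `(λ_k)_{k ≥ 1}` has the Airy-eigenvalue property with
constant `K > 0` if it is weakly increasing and for every `k ≥ 1` there is `R_k` with
`|R_k| ≤ K/k`, `k − 1/4 + R_k > 0`, and `λ_k = ((3π/2)(k − 1/4 + R_k))^{2/3}`. -/
def AiryEigenvalueProperty (lam : ℕ → ℝ) (K : ℝ) : Prop :=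
  (∀ k : ℕ, 1 ≤ k → 0 < lam k) ∧
  (∀ j k : ℕ, 1 ≤ j → j ≤ k → lam j ≤ lam k) ∧
  (∀ k : ℕ, 1 ≤ k → ∃ R : ℝ, |R| ≤ K / k ∧ 0 < (k : ℝ) - 1/4 + R ∧
    lam k = ((3 * Real.pi / 2) * ((k : ℝ) - 1/4 + R)) ^ ((2:ℝ)/3))

private lemma bern {a : ℝ} (ha : 0 ≤ a) :
    5/3 * a ^ ((2:ℝ)/3) + a ^ ((5:ℝ)/3) ≤ (a + 1) ^ ((5:ℝ)/3) := by
  rcases eq_or_lt_of_le ha with h | h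
  · rw [← h]
    rw [Real.zero_rpow (by norm_num), Real.zero_rpow (by norm_num)]
    rw [zero_add, Real.one_rpow]
    norm_num
  · have hsplit : a ^ ((5:ℝ)/3) = a * a ^ ((2:ℝ)/3) := by
      rw [show (5:ℝ)/3 = 1 + 2/3 by norm_num, Real.rpow_add h, Real.rpow_one]
    have hinv : (-1:ℝ) ≤ 1/a := by
      have : (0:ℝ) < 1/a := by positivity
      linarith
    have hb : 1 + (5/3 : ℝ) * (1/a) ≤ (1 + 1/a) ^ ((5:ℝ)/3) :=
      one_add_mul_self_le_rpow_one_add hinv (by norm_num)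
    have key : a ^ ((5:ℝ)/3) * (1 + (5/3 : ℝ) * (1/a)) ≤ a ^ ((5:ℝ)/3) * (1 + 1/a) ^ ((5:ℝ)/3) :=
      mul_le_mul_of_nonneg_left hb (Real.rpow_nonneg ha _)
    have hexp : a ^ ((5:ℝ)/3) * (1 + (5/3 : ℝ) * (1/a)) = a ^ ((5:ℝ)/3) + 5/3 * a ^ ((2:ℝ)/3) := by
      rw [hsplit]; field_simp
    have hrhs : (a + 1) ^ ((5:ℝ)/3) = a ^ ((5:ℝ)/3) * (1 + 1/a) ^ ((5:ℝ)/3) := by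
      rw [← Real.mul_rpow ha (by positivity)]
      congr 1
      field_simp
    rw [hrhs]
    linarith [key, hexp]

private lemma sumpow {K : ℝ} (hK : 0 ≤ K) (n : ℕ) :
    ∑ k ∈ Finset.Icc 1 n, ((k : ℝ) + K) ^ ((2:ℝ)/3)
      ≤ 3/5 * ((n : ℝ) + K + 1) ^ ((5:ℝ)/3) := by
  induction n with
  | zero => simp; positivity
  | succ n ih =>
    rw [Finset.sum_Icc_succ_top (by omega)]
    have hcast : ((n + 1 : ℕ) : ℝ) + K = (n : ℝ) + K + 1 := by push_cast; ring
    have hb := bern (a := (n : ℝ) + K + 1) (by positivity)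
    have h2 : (((n+1:ℕ) : ℝ) + K) ^ ((2:ℝ)/3) = ((n : ℝ) + K + 1) ^ ((2:ℝ)/3) := by rw [hcast]
    have h3 : (((n+1:ℕ) : ℝ) + K + 1) ^ ((5:ℝ)/3) = ((n : ℝ) + K + 1 + 1) ^ ((5:ℝ)/3) := by
      rw [hcast]
    rw [h2, h3]
    linarith [ih]

private lemma J_ge (T s x lamk : ℝ) (hT : 0 ≤ T) :
    (1/2) * T ^ ((1:ℝ)/3) * (max (s - lamk) 0 - max (-lamk - x) 0) ≤ J T s x := by
  set t := T ^ ((1:ℝ)/3) with htdef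
  have ht : 0 ≤ t := Real.rpow_nonneg hT _
  have hexp := Real.exp_pos (t * (x + s))
  have hlog0 : 0 ≤ Real.log (1 + Real.exp (t * (x + s))) := Real.log_nonneg (by linarith)
  have hlog1 : t * (x + s) ≤ Real.log (1 + Real.exp (t * (x + s))) := by
    calc t * (x + s) = Real.log (Real.exp (t * (x + s))) := (Real.log_exp _).symm
      _ ≤ _ := Real.log_le_log (Real.exp_pos _) (by linarith)
  have hMD : 0 ≤ max (-lamk - x) 0 := le_max_right _ _
  unfold J
  rcases le_total (s - lamk) 0 with h | h
  · rw [max_eq_right h]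
    have h1 : (0 : ℝ) - max (-lamk - x) 0 ≤ 0 := by linarith
    nlinarith
  · rw [max_eq_left h]
    have h2 : s - lamk - max (-lamk - x) 0 ≤ x + s := by
      have := le_max_left (-lamk - x) (0 : ℝ); linarith
    have h3 : t * (s - lamk - max (-lamk - x) 0) ≤ t * (x + s) :=
      mul_le_mul_of_nonneg_left h2 ht
    linarith

private lemma J_nonneg (T s x : ℝ) : 0 ≤ J T s x := by
  unfold J
  have := Real.exp_pos (T ^ ((1:ℝ)/3) * (x + s))
  have := Real.log_nonneg (x := 1 + Real.exp (T ^ ((1:ℝ)/3) * (x + s))) (by linarith)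
  linarith

theorem lower_bound_sum_J (ε K : ℝ) (hε : ε ∈ Set.Ioo (0:ℝ) (1/3)) (hK : 0 < K)
    (lam : ℕ → ℝ) (hlam : AiryEigenvalueProperty lam K) :
    ∃ S₀ R : ℝ, 0 < S₀ ∧ 0 < R ∧
      ∀ s : ℝ, S₀ ≤ s → ∀ T : ℝ, 0 ≤ T → ∀ a : ℕ → ℝ,
        ENNReal.ofReal ((1/2) * T ^ ((1:ℝ)/3) *
            (4 * s ^ ((5:ℝ)/2) / (15 * Real.pi) * (1 - 8 * ε)
              - (∑ k ∈ Finset.Icc 1 ⌊2 * s ^ ((3:ℝ)/2) / (3 * Real.pi)⌋₊,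
                  max (-lam k - a k) 0)
              - R))
          ≤ ∑' k : ℕ, ENNReal.ofReal (J T s (a (k + 1))) := by
  obtain ⟨hε0, hε3⟩ := hε
  obtain ⟨hposl, hmono, hform⟩ := hlam
  have hπ := Real.pi_pos
  refine ⟨1 + 3 * Real.pi * (K + 1) / ε + 15 * Real.pi / ε, 1, by positivity, one_pos, ?_⟩
  intro s hs T hT a
  have hterm1 : 0 < 3 * Real.pi * (K + 1) / ε := by positivity
  have hterm2 : 0 < 15 * Real.pi / ε := by positivity
  have hs1 : (1:ℝ) ≤ s := by linarith
  have hs0 : (0:ℝ) < s := by linarith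
  have hsA : 3 * Real.pi * (K + 1) / ε ≤ s := by linarith
  have hsB : 15 * Real.pi / ε ≤ s := by linarith
  have hεsA : 3 * Real.pi * (K + 1) ≤ ε * s := by
    rw [div_le_iff₀ hε0] at hsA; linarith
  have hεsB : 15 * Real.pi ≤ ε * s := by
    rw [div_le_iff₀ hε0] at hsB; linarith
  set t := T ^ ((1:ℝ)/3) with htdef
  have ht : 0 ≤ t := Real.rpow_nonneg hT _
  set m : ℝ := 2 * s ^ ((3:ℝ)/2) / (3 * Real.pi) with hmdef
  set n : ℕ := ⌊m⌋₊ with hndef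
  -- basic facts about powers of s
  have hs32nn : (0:ℝ) ≤ s ^ ((3:ℝ)/2) := Real.rpow_nonneg hs0.le _
  have hs_le_32 : s ≤ s ^ ((3:ℝ)/2) := by
    have := Real.rpow_le_rpow_of_exponent_le hs1 (show (1:ℝ) ≤ 3/2 by norm_num)
    rwa [Real.rpow_one] at this
  have hsplit52 : s ^ ((5:ℝ)/2) = s ^ ((3:ℝ)/2) * s := by
    rw [show (5:ℝ)/2 = 3/2 + 1 by norm_num, Real.rpow_add hs0, Real.rpow_one]
  have hm0 : (0:ℝ) ≤ m := by rw [hmdef]; positivity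
  have h3π : (0:ℝ) < 3 * Real.pi := by positivity
  -- K+1 ≤ ε m  and  10 ≤ ε m
  have hεm_eq : ε * m = 2 * (ε * s ^ ((3:ℝ)/2)) / (3 * Real.pi) := by rw [hmdef]; ring
  have hεs32 : ε * s ≤ ε * s ^ ((3:ℝ)/2) := mul_le_mul_of_nonneg_left hs_le_32 hε0.le
  have hεs32nn : (0:ℝ) ≤ ε * s ^ ((3:ℝ)/2) := mul_nonneg hε0.le hs32nn
  have hεm : K + 1 ≤ ε * m := by
    rw [hεm_eq, le_div_iff₀ h3π]; linarith [hεsA, hεs32, hεs32nn]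
  have hm10 : 10 ≤ ε * m := by
    rw [hεm_eq, le_div_iff₀ h3π]; linarith [hεsB, hεs32, hεs32nn]
  -- floor bounds
  have hfle : (n : ℝ) ≤ m := Nat.floor_le hm0
  have hfge : m - 1 ≤ (n : ℝ) := (Nat.sub_one_lt_floor m).le
  -- eigenvalue upper bound
  set c : ℝ := (3 * Real.pi / 2) ^ ((2:ℝ)/3) with hcdef
  have hc0 : (0:ℝ) ≤ c := Real.rpow_nonneg (by positivity) _
  have hlamk : ∀ k ∈ Finset.Icc 1 n, lam k ≤ c * ((k : ℝ) + K) ^ ((2:ℝ)/3) := by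
    intro k hk
    have hk1 : 1 ≤ k := (Finset.mem_Icc.mp hk).1
    obtain ⟨Rk, hRk, hRpos, heq⟩ := hform k hk1
    have hkr : (1:ℝ) ≤ (k:ℝ) := by exact_mod_cast hk1
    have hRK : Rk ≤ K := by
      have h1 : Rk ≤ |Rk| := le_abs_self _
      have h2 : K / (k:ℝ) ≤ K := by
        rw [div_le_iff₀ (by linarith)]
        have := mul_le_mul_of_nonneg_left hkr hK.le
        linarith
      linarith
    have hbase : (k:ℝ) - 1/4 + Rk ≤ (k:ℝ) + K := by linarith
    have hsplitr : ((3*Real.pi/2) * ((k:ℝ) + K)) ^ ((2:ℝ)/3)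
        = (3*Real.pi/2) ^ ((2:ℝ)/3) * ((k:ℝ) + K) ^ ((2:ℝ)/3) :=
      Real.mul_rpow (by positivity) (by positivity)
    rw [heq, hcdef, ← hsplitr]
    exact Real.rpow_le_rpow (mul_nonneg (by positivity) hRpos.le)
      (mul_le_mul_of_nonneg_left hbase (by positivity)) (by norm_num)
  -- sums
  set SumLam : ℝ := ∑ k ∈ Finset.Icc 1 n, lam k with hSumLamdef
  set SumD : ℝ := ∑ k ∈ Finset.Icc 1 n, max (-lam k - a k) 0 with hSumDdef
  set SumP : ℝ := ∑ k ∈ Finset.Icc 1 n, max (s - lam k) 0 with hSumPdef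
  have hSumLam : SumLam ≤ c * (3/5 * ((n : ℝ) + K + 1) ^ ((5:ℝ)/3)) := by
    calc SumLam ≤ ∑ k ∈ Finset.Icc 1 n, c * ((k : ℝ) + K) ^ ((2:ℝ)/3) :=
          Finset.sum_le_sum hlamk
      _ = c * ∑ k ∈ Finset.Icc 1 n, ((k : ℝ) + K) ^ ((2:ℝ)/3) := by rw [Finset.mul_sum]
      _ ≤ c * (3/5 * ((n : ℝ) + K + 1) ^ ((5:ℝ)/3)) :=
          mul_le_mul_of_nonneg_left (sumpow (by positivity) n) hc0
  -- (n+K+1)^{5/3} ≤ (1+3ε) m^{5/3}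
  have hm53nn : (0:ℝ) ≤ m ^ ((5:ℝ)/3) := Real.rpow_nonneg hm0 _
  have hnK : (n : ℝ) + K + 1 ≤ (1 + ε) * m := by
    have : (1 + ε) * m = m + ε * m := by ring
    linarith [hfle, hεm]
  have h53 : ((n : ℝ) + K + 1) ^ ((5:ℝ)/3) ≤ (1 + 3*ε) * m ^ ((5:ℝ)/3) := by
    have e1 : ((n : ℝ) + K + 1) ^ ((5:ℝ)/3) ≤ ((1 + ε) * m) ^ ((5:ℝ)/3) :=
      Real.rpow_le_rpow (by positivity) hnK (by norm_num)
    have e2 : ((1 + ε) * m) ^ ((5:ℝ)/3) = (1 + ε) ^ ((5:ℝ)/3) * m ^ ((5:ℝ)/3) :=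
      Real.mul_rpow (by linarith) hm0
    have e3 : (1 + ε) ^ ((5:ℝ)/3) ≤ (1 + ε) ^ ((2:ℝ)) :=
      Real.rpow_le_rpow_of_exponent_le (by linarith) (by norm_num)
    have e4 : (1 + ε) ^ ((2:ℝ)) = (1 + ε) ^ (2:ℕ) := Real.rpow_two _
    have e5 : (1 + ε) ^ (2:ℕ) ≤ 1 + 3*ε := by nlinarith [hε0.le, hε3]
    have e6 : (1 + ε) ^ ((5:ℝ)/3) * m ^ ((5:ℝ)/3) ≤ (1 + 3*ε) * m ^ ((5:ℝ)/3) := by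
      apply mul_le_mul_of_nonneg_right _ hm53nn
      calc (1 + ε) ^ ((5:ℝ)/3) ≤ (1 + ε) ^ ((2:ℝ)) := e3
        _ = (1 + ε) ^ (2:ℕ) := e4
        _ ≤ 1 + 3*ε := e5
    linarith [e1, e2.le, e2.ge]
  -- c * m^{5/3} = m * s / s * ... : show c * m^{5/3} = 2/(3π) * s^{5/2}
  have hcm : c * m ^ ((5:ℝ)/3) = m * s := by
    set v : ℝ := 3 * Real.pi / 2 with hvdef
    have hv0 : (0:ℝ) < v := by positivity
    have hmu : m = v⁻¹ * s ^ ((3:ℝ)/2) := by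
      rw [hmdef, hvdef]; field_simp
    have h1 : m ^ ((5:ℝ)/3) = v⁻¹ ^ ((5:ℝ)/3) * s ^ ((5:ℝ)/2) := by
      rw [hmu, Real.mul_rpow (by positivity) hs32nn]
      congr 1
      rw [← Real.rpow_mul hs0.le]
      norm_num
    have h2 : c * v⁻¹ ^ ((5:ℝ)/3) = v⁻¹ := by
      rw [hcdef, Real.inv_rpow hv0.le, ← Real.rpow_neg hv0.le,
        ← Real.rpow_add hv0]
      norm_num
      rw [Real.rpow_neg_one]
    calc c * m ^ ((5:ℝ)/3) = (c * v⁻¹ ^ ((5:ℝ)/3)) * s ^ ((5:ℝ)/2) := by rw [h1]; ring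
      _ = v⁻¹ * s ^ ((5:ℝ)/2) := by rw [h2]
      _ = m * s := by rw [hmu, hsplit52]; ring
  -- key real inequality: A ≤ n*s - SumLam
  have hms0 : 0 ≤ m * s := mul_nonneg hm0 hs0.le
  have hF1 : SumLam ≤ 3/5 * (1 + 3*ε) * (m * s) := by
    have := mul_le_mul_of_nonneg_left h53 hc0
    calc SumLam ≤ c * (3/5 * ((n : ℝ) + K + 1) ^ ((5:ℝ)/3)) := hSumLam
      _ ≤ c * (3/5 * ((1 + 3*ε) * m ^ ((5:ℝ)/3))) :=
          mul_le_mul_of_nonneg_left (by linarith [h53]) hc0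
      _ = 3/5 * (1 + 3*ε) * (c * m ^ ((5:ℝ)/3)) := by ring
      _ = 3/5 * (1 + 3*ε) * (m * s) := by rw [hcm]
  have hF2 : m * s - s ≤ (n : ℝ) * s := by
    have := mul_le_mul_of_nonneg_right hfge hs0.le
    linarith
  have hF3 : s ≤ 7 * ε / 5 * (m * s) := by
    have := mul_le_mul_of_nonneg_right hm10 hs0.le
    linarith
  have hA_eq : 4 * s ^ ((5:ℝ)/2) / (15 * Real.pi) * (1 - 8 * ε)
      = 2/5 * (1 - 8*ε) * (m * s) := by
    rw [hmdef, hsplit52]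
    field_simp
    ring
  have hA : 4 * s ^ ((5:ℝ)/2) / (15 * Real.pi) * (1 - 8 * ε) ≤ (n : ℝ) * s - SumLam := by
    rw [hA_eq]; linarith [hF1, hF2, hF3]
  -- SumP ≥ n*s - SumLam
  have hsum_sub : ∑ k ∈ Finset.Icc 1 n, (s - lam k) = (n : ℝ) * s - SumLam := by
    rw [Finset.sum_sub_distrib, Finset.sum_const, Nat.card_Icc]
    simp [mul_comm]
    rfl
  have hSumP : (n : ℝ) * s - SumLam ≤ SumP := by
    rw [← hsum_sub]
    exact Finset.sum_le_sum fun k _ => le_max_left _ _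
  -- sum of J bounds
  have hSumJ : (1/2) * t * (SumP - SumD) ≤ ∑ k ∈ Finset.Icc 1 n, J T s (a k) := by
    have := Finset.sum_le_sum (f := fun k => (1/2) * t * (max (s - lam k) 0 - max (-lam k - a k) 0))
      (g := fun k => J T s (a k)) (s := Finset.Icc 1 n)
      (fun k _ => J_ge T s (a k) (lam k) hT)
    calc (1/2) * t * (SumP - SumD)
        = ∑ k ∈ Finset.Icc 1 n, (1/2) * t * (max (s - lam k) 0 - max (-lam k - a k) 0) := by
          rw [hSumPdef, hSumDdef, ← Finset.sum_sub_distrib, Finset.mul_sum]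
      _ ≤ _ := this
  have hReal : (1/2) * t *
      (4 * s ^ ((5:ℝ)/2) / (15 * Real.pi) * (1 - 8 * ε) - SumD - 1)
      ≤ ∑ k ∈ Finset.Icc 1 n, J T s (a k) := by
    have h1 : 4 * s ^ ((5:ℝ)/2) / (15 * Real.pi) * (1 - 8 * ε) - SumD - 1
        ≤ SumP - SumD := by linarith
    calc (1/2) * t * (4 * s ^ ((5:ℝ)/2) / (15 * Real.pi) * (1 - 8 * ε) - SumD - 1)
        ≤ (1/2) * t * (SumP - SumD) := by
          apply mul_le_mul_of_nonneg_left h1 (by positivity)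
      _ ≤ _ := hSumJ
  -- pass to ENNReal
  calc ENNReal.ofReal ((1/2) * t *
        (4 * s ^ ((5:ℝ)/2) / (15 * Real.pi) * (1 - 8 * ε) - SumD - 1))
      ≤ ENNReal.ofReal (∑ k ∈ Finset.Icc 1 n, J T s (a k)) :=
        ENNReal.ofReal_le_ofReal hReal
    _ = ∑ k ∈ Finset.Icc 1 n, ENNReal.ofReal (J T s (a k)) :=
        ENNReal.ofReal_sum_of_nonneg fun k _ => J_nonneg T s (a k)
    _ = ∑ i ∈ Finset.range n, ENNReal.ofReal (J T s (a (1 + i))) := by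
        rw [← Finset.Ico_add_one_right_eq_Icc, Finset.sum_Ico_eq_sum_range]
        simp
    _ = ∑ i ∈ Finset.range n, ENNReal.ofReal (J T s (a (i + 1))) := by
        refine Finset.sum_congr rfl fun i _ => by rw [add_comm]
    _ ≤ ∑' k : ℕ, ENNReal.ofReal (J T s (a (k + 1))) := ENNReal.sum_le_tsum _
end

section
/- Fix ε ∈ (0,1/3) and K > 0, let (λ_k)_{k≥1} have the Airy-eigenvalue property with constant K, and set θ₁ := ⌈4K⌉. There exists a positive constant S₀ (depending only on ε and K, chosen in particular so large that θ₁ < θ₂ below) such that for every s ≥ S₀, every T ≥ 0, and all nonnegative reals (D_k), writing θ₂ := ⌈2 s^{3/2}/(3π) + 1/2⌉, one has Σ_{k=θ₁+1}^{θ₂−1} J_s(−λ_k − D_k) ≥ (1/2)·T^{1/3}·( (4 s^{5/2}/(15π))·(1 − 3ε) − (θ₁ + 1)·s − Σ_{k=θ₁+1}^{θ₂−1} D_k ). -/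
/-!
Since `log (1 + e^y) ≥ y`, each summand `J_s(-λ_k - D_k)` is at least `T^{1/3} (s - λ_k - D_k) / 2`,
so it suffices to bound `∑ λ_k` over the block from above. For `k ≥ 4K` the remainder `R_k` is at
most `1/4`, hence `λ_k ≤ (3πk/2)^{2/3}`, and `∑_{k ≤ N} k^{2/3} ≤ (3/5)(N+1)^{5/3}` by the tangent-line
bound for `x^{5/3}`. With `A = 2s^{3/2}/(3π)` one has `(3π/2)^{2/3} A^{5/3} = A s`, and
`θ₂ = ⌈A + 1/2⌉ ≤ A (1 + 2ε/3)` once `A ≥ 9/(4ε)`; the main terms then add up to at most `θ₂ s`.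
-/

open Real Finset

lemma Real.le_log_one_add_exp (y : ℝ) : y ≤ log (1 + exp y) := by
  simpa only [log_exp] using log_le_log (exp_pos y) (by linarith [exp_pos y])

lemma half_mul_add_le_J (T s x : ℝ) : 1 / 2 * T ^ ((1:ℝ)/3) * (x + s) ≤ J T s x := by
  have := Real.le_log_one_add_exp (T ^ ((1:ℝ)/3) * (x + s))
  unfold J
  linarith

lemma Real.rpow_add_one_add_mul_rpow_le {a q : ℝ} (ha : 0 < a) (hq : 0 ≤ q) :
    a ^ (q + 1) + (q + 1) * a ^ q ≤ (a + 1) ^ (q + 1) := by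
  have hbern : 1 + (q + 1) * a⁻¹ ≤ (1 + a⁻¹) ^ (q + 1) :=
    one_add_mul_self_le_rpow_one_add (by linarith [inv_pos.2 ha]) (by linarith)
  calc a ^ (q + 1) + (q + 1) * a ^ q = a ^ (q + 1) * (1 + (q + 1) * a⁻¹) := by
        rw [rpow_add_one ha.ne']; field_simp
    _ ≤ a ^ (q + 1) * (1 + a⁻¹) ^ (q + 1) := by gcongr
    _ = (a + 1) ^ (q + 1) := by
        rw [← mul_rpow ha.le (by positivity), mul_add, mul_inv_cancel₀ ha.ne', mul_one]

lemma sum_Icc_rpow_le {q : ℝ} (hq : 0 ≤ q) (N : ℕ) :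
    ∑ k ∈ Icc 1 N, (k : ℝ) ^ q ≤ ((N : ℝ) + 1) ^ (q + 1) / (q + 1) := by
  induction N with
  | zero => simp only [Icc_eq_empty_of_lt one_pos, sum_empty]; positivity
  | succ n ih =>
    rw [sum_Icc_succ_top (by omega)]
    have := Real.rpow_add_one_add_mul_rpow_le (a := (n : ℝ) + 1) (by positivity) hq
    push_cast
    rw [le_div_iff₀ (by positivity)] at *
    nlinarith

lemma AiryEigenvalueProperty.le_rpow {lam : ℕ → ℝ} {K : ℝ} (h : AiryEigenvalueProperty lam K)
    {k : ℕ} (hk : 1 ≤ k) (hKk : 4 * K ≤ k) :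
    lam k ≤ (3 * π / 2) ^ ((2:ℝ)/3) * (k : ℝ) ^ ((2:ℝ)/3) := by
  obtain ⟨R, hR, hpos, hlam⟩ := h.2.2 k hk
  have hk0 : (0 : ℝ) < k := by exact_mod_cast hk
  have hR4 : R ≤ 1 / 4 :=
    (le_abs_self R).trans (hR.trans ((div_le_iff₀ hk0).2 (by linarith)))
  rw [hlam, ← mul_rpow (by positivity) hk0.le]
  gcongr ?_ ^ _
  gcongr
  linarith

lemma AiryEigenvalueProperty.sum_Icc_le {lam : ℕ → ℝ} {K : ℝ}
    (h : AiryEigenvalueProperty lam K) {m : ℕ} (hm : 4 * K ≤ m) (N : ℕ) :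
    ∑ k ∈ Icc (m + 1) N, lam k ≤ 3 / 5 * (3 * π / 2) ^ ((2:ℝ)/3) * ((N : ℝ) + 1) ^ ((5:ℝ)/3) := by
  calc ∑ k ∈ Icc (m + 1) N, lam k
      ≤ ∑ k ∈ Icc (m + 1) N, (3 * π / 2) ^ ((2:ℝ)/3) * (k : ℝ) ^ ((2:ℝ)/3) := by
        refine sum_le_sum fun k hk => h.le_rpow (by grind) (hm.trans ?_)
        exact_mod_cast (by grind : m ≤ k)
    _ ≤ (3 * π / 2) ^ ((2:ℝ)/3) * ∑ k ∈ Icc 1 N, (k : ℝ) ^ ((2:ℝ)/3) := by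
        rw [← mul_sum]
        gcongr
        omega
    _ ≤ 3 / 5 * (3 * π / 2) ^ ((2:ℝ)/3) * ((N : ℝ) + 1) ^ ((5:ℝ)/3) := by
        have := sum_Icc_rpow_le (q := 2 / 3) (by norm_num) N
        norm_num at this
        nlinarith [this, show 0 ≤ (3 * π / 2) ^ ((2:ℝ)/3) by positivity]

/-- Since `(3π/2 · airyCount s) ^ (2/3) = s`, this is, to leading order, the number of Airy
eigenvalues below `s`. -/
noncomputable def airyCount (s : ℝ) : ℝ := 2 * s ^ ((3:ℝ)/2) / (3 * π)

lemma airyCount_nonneg {s : ℝ} (hs : 0 ≤ s) : 0 ≤ airyCount s := by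
  unfold airyCount; positivity

lemma three_pi_div_two_mul_airyCount (s : ℝ) : 3 * π / 2 * airyCount s = s ^ ((3:ℝ)/2) := by
  unfold airyCount; field_simp

lemma three_pi_div_two_mul_airyCount_rpow {s : ℝ} (hs : 0 ≤ s) :
    (3 * π / 2 * airyCount s) ^ ((2:ℝ)/3) = s := by
  rw [three_pi_div_two_mul_airyCount, ← rpow_mul hs]; norm_num

lemma le_airyCount_of_rpow_le {B s : ℝ} (hB : 0 ≤ B) (hs : (3 * π / 2 * B) ^ ((2:ℝ)/3) ≤ s) :
    B ≤ airyCount s := by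
  have hs0 : 0 ≤ s := (rpow_nonneg (by positivity) _).trans hs
  rw [← three_pi_div_two_mul_airyCount_rpow hs0,
    rpow_le_rpow_iff (by positivity) (by positivity [airyCount_nonneg hs0]) (by norm_num)] at hs
  exact le_of_mul_le_mul_left hs (by positivity)

lemma rpow_mul_airyCount_rpow {s : ℝ} (hs : 0 ≤ s) :
    (3 * π / 2) ^ ((2:ℝ)/3) * airyCount s ^ ((5:ℝ)/3) = airyCount s * s := by
  have hA := airyCount_nonneg hs
  rw [show (5:ℝ)/3 = 2/3 + 1 by norm_num, rpow_add' hA (by norm_num), rpow_one, ← mul_assoc,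
    ← mul_rpow (by positivity) hA, three_pi_div_two_mul_airyCount_rpow hs, mul_comm]

lemma one_add_rpow_five_thirds_le {δ : ℝ} (hδ : 0 ≤ δ) (hδ' : δ ≤ 1) :
    (1 + δ) ^ ((5:ℝ)/3) ≤ 1 + 3 * δ :=
  calc (1 + δ) ^ ((5:ℝ)/3) ≤ (1 + δ) ^ (2:ℝ) :=
        rpow_le_rpow_of_exponent_le (by linarith) (by norm_num)
    _ ≤ 1 + 3 * δ := by rw [rpow_two]; nlinarith

lemma middle_block_main_term_le {ε s θ : ℝ} (hε : 0 ≤ ε) (hε' : ε ≤ 3 / 2) (hs : 0 ≤ s)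
    (hθ : airyCount s ≤ θ) (hθ' : θ ≤ airyCount s * (1 + 2 * ε / 3)) :
    4 * s ^ ((5:ℝ)/2) / (15 * π) * (1 - 3 * ε) + 3 / 5 * (3 * π / 2) ^ ((2:ℝ)/3) * θ ^ ((5:ℝ)/3)
      ≤ θ * s := by
  have hA := airyCount_nonneg hs
  have hlead : 4 * s ^ ((5:ℝ)/2) / (15 * π) = 2 / 5 * (airyCount s * s) := by
    rw [show (5:ℝ)/2 = 3/2 + 1 by norm_num, rpow_add' hs (by norm_num), rpow_one]
    unfold airyCount; field_simp; ring
  have hθ53 : θ ^ ((5:ℝ)/3) ≤ airyCount s ^ ((5:ℝ)/3) * (1 + 2 * ε) :=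
    calc θ ^ ((5:ℝ)/3) ≤ (airyCount s * (1 + 2 * ε / 3)) ^ ((5:ℝ)/3) := by gcongr; linarith
      _ = airyCount s ^ ((5:ℝ)/3) * (1 + 2 * ε / 3) ^ ((5:ℝ)/3) := mul_rpow hA (by linarith)
      _ ≤ airyCount s ^ ((5:ℝ)/3) * (1 + 2 * ε) := by
        gcongr
        linarith [one_add_rpow_five_thirds_le (δ := 2 * ε / 3) (by linarith) (by linarith)]
  have hc : 0 ≤ (3 * π / 2) ^ ((2:ℝ)/3) := by positivity
  calc _ ≤ 2 / 5 * (airyCount s * s) * (1 - 3 * ε)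
        + 3 / 5 * ((3 * π / 2) ^ ((2:ℝ)/3) * airyCount s ^ ((5:ℝ)/3)) * (1 + 2 * ε) := by
        rw [hlead]; nlinarith
    _ = airyCount s * s := by rw [rpow_mul_airyCount_rpow hs]; ring
    _ ≤ θ * s := by gcongr

lemma AiryEigenvalueProperty.sum_Icc_sub_sub_ge {lam : ℕ → ℝ} {K : ℝ}
    (h : AiryEigenvalueProperty lam K) {m N : ℕ} (hm : 4 * K ≤ m) (hmN : m ≤ N) (s : ℝ)
    (D : ℕ → ℝ) :
    ((N : ℝ) - m) * s - 3 / 5 * (3 * π / 2) ^ ((2:ℝ)/3) * ((N : ℝ) + 1) ^ ((5:ℝ)/3)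
        - ∑ k ∈ Icc (m + 1) N, D k
      ≤ ∑ k ∈ Icc (m + 1) N, (-lam k - D k + s) := by
  rw [sum_add_distrib, sum_sub_distrib, sum_neg_distrib, sum_const, Nat.card_Icc, nsmul_eq_mul,
    Nat.cast_sub (by omega)]
  push_cast
  linarith [h.sum_Icc_le hm N]

theorem middle_block_lower_bound_general (ε K : ℝ) (hε : ε ∈ Set.Ioo (0:ℝ) (1/3))
    (lam : ℕ → ℝ) (hlam : AiryEigenvalueProperty lam K) :
    ∃ S₀ : ℝ, 0 < S₀ ∧
      ∀ s : ℝ, S₀ ≤ s → ∀ T : ℝ, 0 ≤ T → ∀ D : ℕ → ℝ, (∀ k, 0 ≤ D k) →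
        ⌈4 * K⌉₊ < ⌈2 * s ^ ((3:ℝ)/2) / (3 * Real.pi) + 1/2⌉₊ ∧
        (1/2) * T ^ ((1:ℝ)/3) *
            (4 * s ^ ((5:ℝ)/2) / (15 * Real.pi) * (1 - 3 * ε)
              - ((⌈4 * K⌉₊ : ℝ) + 1) * s
              - ∑ k ∈ Finset.Icc (⌈4 * K⌉₊ + 1) (⌈2 * s ^ ((3:ℝ)/2) / (3 * Real.pi) + 1/2⌉₊ - 1),
                  D k)
          ≤ ∑ k ∈ Finset.Icc (⌈4 * K⌉₊ + 1) (⌈2 * s ^ ((3:ℝ)/2) / (3 * Real.pi) + 1/2⌉₊ - 1),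
              J T s (-lam k - D k) := by
  obtain ⟨hε0, hε1⟩ := hε
  set θ₁ := ⌈4 * K⌉₊
  refine ⟨(3 * π / 2 * (θ₁ + 9 / (4 * ε))) ^ ((2:ℝ)/3), by positivity, fun s hs T hT D _ => ?_⟩
  have hs0 : 0 ≤ s := (rpow_nonneg (by positivity) _).trans hs
  have hA : θ₁ + 9 / (4 * ε) ≤ airyCount s := le_airyCount_of_rpow_le (by positivity) hs
  have hεA : 3 / 2 ≤ airyCount s * (2 * ε / 3) := by
    have : 9 / (4 * ε) * (2 * ε / 3) = 3 / 2 := by field_simp; ring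
    nlinarith [Nat.cast_nonneg (α := ℝ) θ₁]
  rw [show 2 * s ^ ((3:ℝ)/2) / (3 * π) = airyCount s from rfl]
  obtain ⟨N, hN⟩ : ∃ N, ⌈airyCount s + 1/2⌉₊ = N + 1 :=
    Nat.exists_eq_add_one.2 (Nat.ceil_pos.2 (by positivity [airyCount_nonneg hs0]))
  have hN_ge : airyCount s + 1/2 ≤ N + 1 := by exact_mod_cast hN ▸ Nat.le_ceil _
  have hN_lt : (N : ℝ) + 1 < airyCount s + 1/2 + 1 := by
    exact_mod_cast hN ▸ Nat.ceil_lt_add_one (by positivity [airyCount_nonneg hs0])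
  have hθ₁N : θ₁ ≤ N := by
    have : (θ₁ : ℝ) < N + 1 := by linarith [show 0 ≤ 9 / (4 * ε) by positivity]
    exact Nat.lt_succ_iff.1 (by exact_mod_cast this)
  rw [hN, Nat.add_sub_cancel]
  refine ⟨by omega, ?_⟩
  have hmain := middle_block_main_term_le (θ := N + 1) hε0.le (by linarith) hs0
    (by linarith) (by linarith)
  calc _ ≤ 1 / 2 * T ^ ((1:ℝ)/3) * ∑ k ∈ Icc (θ₁ + 1) N, (-lam k - D k + s) := by
        gcongr
        linarith [hlam.sum_Icc_sub_sub_ge (Nat.le_ceil _) hθ₁N s D]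
    _ = ∑ k ∈ Icc (θ₁ + 1) N, 1 / 2 * T ^ ((1:ℝ)/3) * (-lam k - D k + s) := mul_sum _ _ _
    _ ≤ _ := sum_le_sum fun k _ => half_mul_add_le_J T s _

theorem middle_block_lower_bound (ε K : ℝ) (hε : ε ∈ Set.Ioo (0:ℝ) (1/3)) (hK : 0 < K)
    (lam : ℕ → ℝ) (hlam : AiryEigenvalueProperty lam K) :
    ∃ S₀ : ℝ, 0 < S₀ ∧
      ∀ s : ℝ, S₀ ≤ s → ∀ T : ℝ, 0 ≤ T → ∀ D : ℕ → ℝ, (∀ k, 0 ≤ D k) →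
        ⌈4 * K⌉₊ < ⌈2 * s ^ ((3:ℝ)/2) / (3 * Real.pi) + 1/2⌉₊ ∧
        (1/2) * T ^ ((1:ℝ)/3) *
            (4 * s ^ ((5:ℝ)/2) / (15 * Real.pi) * (1 - 3 * ε)
              - ((⌈4 * K⌉₊ : ℝ) + 1) * s
              - ∑ k ∈ Finset.Icc (⌈4 * K⌉₊ + 1) (⌈2 * s ^ ((3:ℝ)/2) / (3 * Real.pi) + 1/2⌉₊ - 1),
                  D k)
          ≤ ∑ k ∈ Finset.Icc (⌈4 * K⌉₊ + 1) (⌈2 * s ^ ((3:ℝ)/2) / (3 * Real.pi) + 1/2⌉₊ - 1),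
              J T s (-lam k - D k) :=
  middle_block_lower_bound_general ε K hε lam hlam
end

section
/- Fix ε ∈ (0,1/3), δ ∈ (0,1/4), T₀ > 0 and K > 0, set L := 3/(1−δ), and let (λ_k)_{k≥1} have the Airy-eigenvalue property with constant K. Then there exist positive constants C and S₀ (depending only on ε, δ, T₀ and K) such that for all s ≥ S₀ and all T ≥ T₀, the sum over the set of indices k with λ_k > s^L of J_s( (1−ε)·(s^L − λ_k) − s ) (a sum of nonnegative terms) is finite and at most C·s^{3L/4}. -/
open Real

lemma cbrt_add_le (x y : ℝ) (hx : 0 ≤ x) (hy : 0 ≤ y) :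
    (x + y) ^ ((1:ℝ)/3) ≤ x ^ ((1:ℝ)/3) + y ^ ((1:ℝ)/3) := by
  have hx3 : (x ^ ((1:ℝ)/3)) ^ (3:ℕ) = x := by
    rw [← Real.rpow_natCast (x ^ ((1:ℝ)/3)) 3, ← Real.rpow_mul hx]; norm_num
  have hy3 : (y ^ ((1:ℝ)/3)) ^ (3:ℕ) = y := by
    rw [← Real.rpow_natCast (y ^ ((1:ℝ)/3)) 3, ← Real.rpow_mul hy]; norm_num
  have hu : 0 ≤ x ^ ((1:ℝ)/3) := Real.rpow_nonneg hx _
  have hv : 0 ≤ y ^ ((1:ℝ)/3) := Real.rpow_nonneg hy _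
  have key : x + y ≤ (x ^ ((1:ℝ)/3) + y ^ ((1:ℝ)/3)) ^ (3:ℕ) := by
    nlinarith [mul_nonneg hu hv, sq_nonneg (x ^ ((1:ℝ)/3)), sq_nonneg (y ^ ((1:ℝ)/3)),
      mul_nonneg (mul_nonneg hu hu) hv, mul_nonneg (mul_nonneg hu hv) hv, hx3, hy3]
  calc (x + y) ^ ((1:ℝ)/3) ≤ ((x ^ ((1:ℝ)/3) + y ^ ((1:ℝ)/3)) ^ (3:ℕ)) ^ ((1:ℝ)/3) := by
        apply Real.rpow_le_rpow (by positivity) key (by norm_num)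
    _ = x ^ ((1:ℝ)/3) + y ^ ((1:ℝ)/3) := by
        rw [← Real.rpow_natCast (x ^ ((1:ℝ)/3) + y ^ ((1:ℝ)/3)) 3,
          ← Real.rpow_mul (by positivity)]
        norm_num

lemma cube_le_exp (y : ℝ) (hy : 0 ≤ y) : y ^ 3 ≤ 27 * Real.exp y := by
  have h1 : y/3 + 1 ≤ Real.exp (y/3) := Real.add_one_le_exp (y/3)
  have h2 : Real.exp y = Real.exp (y/3) * Real.exp (y/3) * Real.exp (y/3) := by
    rw [← Real.exp_add, ← Real.exp_add]; ring_nf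
  have h3 : (y/3)^3 ≤ Real.exp (y/3) ^ 3 := by
    apply pow_le_pow_left₀ (by positivity) (by linarith)
  calc y^3 = 27 * (y/3)^3 := by ring
    _ ≤ 27 * Real.exp (y/3) ^ 3 := by linarith
    _ = 27 * Real.exp y := by rw [h2]; ring

lemma rpow32_sub_le (a l : ℝ) (ha : 0 ≤ a) (hal : a ≤ l) :
    l ^ ((3:ℝ)/2) - a ^ ((3:ℝ)/2) ≤ 3 * l ^ ((1:ℝ)/2) * (l - a) := by
  have hl : 0 ≤ l := ha.trans hal
  set x := l ^ ((1:ℝ)/2) with hxdef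
  set y := a ^ ((1:ℝ)/2) with hydef
  have hx : 0 ≤ x := Real.rpow_nonneg hl _
  have hy : 0 ≤ y := Real.rpow_nonneg ha _
  have hx2 : x ^ (2:ℕ) = l := by
    rw [hxdef, ← Real.rpow_natCast (l ^ ((1:ℝ)/2)) 2, ← Real.rpow_mul hl]; norm_num
  have hy2 : y ^ (2:ℕ) = a := by
    rw [hydef, ← Real.rpow_natCast (a ^ ((1:ℝ)/2)) 2, ← Real.rpow_mul ha]; norm_num
  have hx3 : x ^ (3:ℕ) = l ^ ((3:ℝ)/2) := by
    rw [hxdef, ← Real.rpow_natCast (l ^ ((1:ℝ)/2)) 3, ← Real.rpow_mul hl]; norm_num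
  have hy3 : y ^ (3:ℕ) = a ^ ((3:ℝ)/2) := by
    rw [hydef, ← Real.rpow_natCast (a ^ ((1:ℝ)/2)) 3, ← Real.rpow_mul ha]; norm_num
  have hxy : y ≤ x := by
    rw [hxdef, hydef]; exact Real.rpow_le_rpow ha hal (by norm_num)
  rw [← hx3, ← hy3, ← hx2, ← hy2]
  nlinarith [mul_nonneg hx hy, sq_nonneg (x - y), sq_nonneg (x + y)]

lemma g1_bound (γ q : ℝ) (hγ : 0 < γ) (hq : 1 ≤ q) (D : ℕ) :
    Summable (fun j : ℕ => (1/2) * Real.exp (-(γ * max ((j:ℝ) - D) 0 / q))) ∧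
    ∑' j : ℕ, (1/2) * Real.exp (-(γ * max ((j:ℝ) - D) 0 / q))
      ≤ (1/2) * Real.exp (γ * D) * (1 + q / γ) := by
  have hq0 : 0 < q := lt_of_lt_of_le one_pos hq
  set r : ℝ := Real.exp (-(γ/q)) with hrdef
  have hr0 : 0 ≤ r := (Real.exp_pos _).le
  have hr1 : r < 1 := Real.exp_lt_one_iff.mpr (by rw [neg_lt, neg_zero]; positivity)
  have hle : ∀ j : ℕ, (1/2) * Real.exp (-(γ * max ((j:ℝ) - D) 0 / q))
      ≤ ((1/2) * Real.exp (γ * D / q)) * r ^ j := by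
    intro j
    have h1 : r ^ j = Real.exp (-(γ/q) * j) := by
      rw [mul_comm, Real.exp_nat_mul]
    have harg : -(γ * max ((j:ℝ) - D) 0 / q) ≤ γ * D / q + -(γ/q) * (j:ℝ) := by
      have hmax : (j:ℝ) - D ≤ max ((j:ℝ) - D) 0 := le_max_left _ _
      have heq : γ * D / q + -(γ/q) * (j:ℝ) = -(γ * ((j:ℝ) - D)) / q := by ring
      have heq2 : -(γ * max ((j:ℝ) - D) 0 / q) = -(γ * max ((j:ℝ) - D) 0) / q := by ring
      rw [heq, heq2]
      gcongr
    have key := Real.exp_le_exp.mpr harg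
    calc (1/2) * Real.exp (-(γ * max ((j:ℝ) - D) 0 / q))
        ≤ (1/2) * Real.exp (γ * D / q + -(γ/q) * (j:ℝ)) := by linarith
      _ = ((1/2) * Real.exp (γ * D / q)) * r ^ j := by rw [Real.exp_add, h1]; ring
  have hG : Summable (fun j : ℕ => ((1/2) * Real.exp (γ * D / q)) * r ^ j) :=
    (summable_geometric_of_lt_one hr0 hr1).mul_left _
  have hpos : ∀ j : ℕ, 0 ≤ (1/2) * Real.exp (-(γ * max ((j:ℝ) - D) 0 / q)) := by
    intro j; positivity
  have hs : Summable (fun j : ℕ => (1/2) * Real.exp (-(γ * max ((j:ℝ) - D) 0 / q))) :=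
    Summable.of_nonneg_of_le hpos hle hG
  refine ⟨hs, ?_⟩
  have h2 : ∑' j : ℕ, (1/2) * Real.exp (-(γ * max ((j:ℝ) - D) 0 / q))
      ≤ ∑' j : ℕ, ((1/2) * Real.exp (γ * D / q)) * r ^ j := Summable.tsum_le_tsum hle hs hG
  have h3 : ∑' j : ℕ, ((1/2) * Real.exp (γ * D / q)) * r ^ j
      = ((1/2) * Real.exp (γ * D / q)) * (1 - r)⁻¹ := by
    rw [tsum_mul_left, tsum_geometric_of_lt_one hr0 hr1]
  set x : ℝ := γ / q with hxdef
  have hx : (0:ℝ) < x := by positivity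
  have hr_le : r ≤ 1/(1 + x) := by
    rw [hrdef, Real.exp_neg, one_div]
    have h1x : 1 + x ≤ Real.exp x := by linarith [Real.add_one_le_exp x]
    exact inv_anti₀ (by linarith) h1x
  have h4 : x/(1+x) ≤ 1 - r := by
    have : 1 - 1/(1+x) = x/(1+x) := by field_simp; ring
    linarith
  have h1r : 0 < 1 - r := by
    have : 0 < x/(1+x) := by positivity
    linarith
  have h5 : (1-r)⁻¹ ≤ 1 + q/γ := by
    have := inv_anti₀ (by positivity : (0:ℝ) < x/(1+x)) h4
    have heq : (x/(1+x))⁻¹ = 1 + q/γ := by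
      rw [hxdef]; field_simp; ring
    rw [heq] at this; exact this
  have h6 : Real.exp (γ * D / q) ≤ Real.exp (γ * D) := by
    apply Real.exp_le_exp.mpr
    exact div_le_self (by positivity) hq
  calc ∑' j : ℕ, (1/2) * Real.exp (-(γ * max ((j:ℝ) - D) 0 / q))
      ≤ ((1/2) * Real.exp (γ * D / q)) * (1 - r)⁻¹ := by rw [← h3]; exact h2
    _ ≤ ((1/2) * Real.exp (γ * D)) * (1 + q/γ) := by
        apply mul_le_mul (by linarith) h5 (by positivity) (by positivity)
    _ = (1/2) * Real.exp (γ * D) * (1 + q / γ) := by ring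

lemma g2_bound (γ : ℝ) (hγ : 0 < γ) (D : ℕ) :
    Summable (fun j : ℕ => (1/2) * Real.exp (-(γ * (max ((j:ℝ) - D) 0) ^ ((2:ℝ)/3)))) ∧
    ∑' j : ℕ, (1/2) * Real.exp (-(γ * (max ((j:ℝ) - D) 0) ^ ((2:ℝ)/3)))
      ≤ ((D:ℝ)+1)/2 + 27/γ^3 := by
  set f : ℕ → ℝ := fun j => (1/2) * Real.exp (-(γ * (max ((j:ℝ) - D) 0) ^ ((2:ℝ)/3))) with hf
  set G : ℕ → ℝ := fun j => if j ≤ D then (1/2:ℝ) else (27/2)/γ^3 * (1/((j:ℝ)-D)^2) with hG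
  have hfpos : ∀ j, 0 ≤ f j := fun j => by rw [hf]; positivity
  have hfG : ∀ j, f j ≤ G j := by
    intro j
    rw [hf, hG]
    by_cases hj : j ≤ D
    · simp only [hj, if_true]
      have : Real.exp (-(γ * (max ((j:ℝ) - D) 0) ^ ((2:ℝ)/3))) ≤ 1 := by
        apply Real.exp_le_one_iff.mpr
        have : (0:ℝ) ≤ γ * (max ((j:ℝ) - D) 0) ^ ((2:ℝ)/3) := by positivity
        linarith
      linarith
    · simp only [hj, if_false]
      push_neg at hj
      have hu1 : (1:ℝ) ≤ (j:ℝ) - D := by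
        have : (D:ℝ) + 1 ≤ (j:ℝ) := by exact_mod_cast hj
        linarith
      have hu0 : (0:ℝ) < (j:ℝ) - D := by linarith
      have hmax : max ((j:ℝ) - D) 0 = (j:ℝ) - D := max_eq_left hu0.le
      rw [hmax]
      set u : ℝ := (j:ℝ) - D
      set y : ℝ := γ * u ^ ((2:ℝ)/3) with hy
      have hy0 : 0 < y := by positivity
      have hy3 : y ^ 3 = γ^3 * u^2 := by
        rw [hy, mul_pow]
        congr 1
        rw [← Real.rpow_natCast (u ^ ((2:ℝ)/3)) 3, ← Real.rpow_mul hu0.le]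
        norm_num
      have hcube := cube_le_exp y hy0.le
      have hexp : Real.exp (-y) ≤ 27 / y^3 := by
        rw [Real.exp_neg, inv_le_iff_one_le_mul₀ (Real.exp_pos y),
          div_mul_eq_mul_div, le_div_iff₀ (by positivity : (0:ℝ) < y^3), one_mul]
        linarith
      have h27 : (27:ℝ)/y^3 = 27/(γ^3*u^2) := by rw [hy3]
      have h28 : 27/2/γ^3 * (1/u^2) = (1/2) * (27/(γ^3*u^2)) := by
        field_simp
      rw [h28]
      rw [h27] at hexp
      linarith
  have hGtail : (fun m : ℕ => G (m + (D+1))) = fun m : ℕ => (27/2)/γ^3 * (1/((m:ℝ)+1)^2) := by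
    funext m
    rw [hG]
    have h1 : ¬ (m + (D+1) ≤ D) := by omega
    simp only [h1, if_false]
    push_cast
    ring_nf
  have hzsum : Summable (fun n : ℕ => (1:ℝ)/(n:ℝ)^2) := hasSum_zeta_two.summable
  have hshift : Summable (fun m : ℕ => (1:ℝ)/((m:ℝ)+1)^2) := by
    have h : Summable (fun n : ℕ => (1:ℝ)/((n+1:ℕ):ℝ)^2) := (summable_nat_add_iff 1).mpr hzsum
    convert h using 2 with m
    push_cast
    ring_nf
  have hGsum : Summable G := by
    rw [← summable_nat_add_iff (D+1), hGtail]
    exact hshift.mul_left _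
  have hfs : Summable f := Summable.of_nonneg_of_le hfpos hfG hGsum
  refine ⟨hfs, ?_⟩
  have h2 : ∑' j, f j ≤ ∑' j, G j := Summable.tsum_le_tsum hfG hfs hGsum
  have h3 : ∑' j, G j = ∑ j ∈ Finset.range (D+1), G j + ∑' m : ℕ, G (m + (D+1)) :=
    (Summable.sum_add_tsum_nat_add (D+1) hGsum).symm
  have h4 : ∑ j ∈ Finset.range (D+1), G j = ((D:ℝ)+1)/2 := by
    have : ∀ j ∈ Finset.range (D+1), G j = (1/2:ℝ) := by
      intro j hjr
      rw [hG]
      have : j ≤ D := by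
        have := Finset.mem_range.mp hjr; omega
      simp [this]
    rw [Finset.sum_congr rfl this, Finset.sum_const, Finset.card_range]
    push_cast
    ring
  have h5 : ∑' m : ℕ, G (m + (D+1)) = (27/2)/γ^3 * ∑' m : ℕ, (1:ℝ)/((m:ℝ)+1)^2 := by
    rw [hGtail, tsum_mul_left]
  have h6 : ∑' m : ℕ, (1:ℝ)/((m:ℝ)+1)^2 ≤ 2 := by
    have hz := hasSum_zeta_two.tsum_eq
    have h7 : ∑ i ∈ Finset.range 1, (1:ℝ)/(i:ℝ)^2 + ∑' m : ℕ, (1:ℝ)/((m+1:ℕ):ℝ)^2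
        = ∑' n : ℕ, (1:ℝ)/(n:ℝ)^2 := Summable.sum_add_tsum_nat_add 1 hzsum
    have h8 : ∑ i ∈ Finset.range 1, (1:ℝ)/(i:ℝ)^2 = 0 := by norm_num
    have h9 : (∑' m : ℕ, (1:ℝ)/((m+1:ℕ):ℝ)^2) = ∑' m : ℕ, (1:ℝ)/((m:ℝ)+1)^2 := by
      congr 1 with m
      push_cast
      ring_nf
    have hpi : Real.pi ^ 2 / 6 ≤ 2 := by
      nlinarith [Real.pi_lt_d2, Real.pi_pos]
    rw [h8, zero_add, h9] at h7
    rw [h7, hz]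
    exact hpi
  calc ∑' j, f j ≤ ∑ j ∈ Finset.range (D+1), G j + ∑' m : ℕ, G (m + (D+1)) := by
        rw [← h3]; exact h2
    _ = ((D:ℝ)+1)/2 + (27/2)/γ^3 * ∑' m : ℕ, (1:ℝ)/((m:ℝ)+1)^2 := by rw [h4, h5]
    _ ≤ ((D:ℝ)+1)/2 + (27/2)/γ^3 * 2 := by
        have : (0:ℝ) ≤ (27/2)/γ^3 := by positivity
        nlinarith
    _ = ((D:ℝ)+1)/2 + 27/γ^3 := by ring

set_option maxHeartbeats 1000000 in
theorem deep_tail_sum_bound (ε δ T₀ K : ℝ) (hε : ε ∈ Set.Ioo (0:ℝ) (1/3))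
    (hδ : δ ∈ Set.Ioo (0:ℝ) (1/4)) (hT₀ : 0 < T₀) (hK : 0 < K)
    (lam : ℕ → ℝ) (hlam : AiryEigenvalueProperty lam K) :
    ∃ C S₀ : ℝ, 0 < C ∧ 0 < S₀ ∧
      ∀ s : ℝ, S₀ ≤ s → ∀ T : ℝ, T₀ ≤ T →
        Summable (fun k : {k : ℕ // 1 ≤ k ∧ s ^ (3 / (1 - δ)) < lam k} =>
          J T s ((1 - ε) * (s ^ (3 / (1 - δ)) - lam k) - s)) ∧
        ∑' k : {k : ℕ // 1 ≤ k ∧ s ^ (3 / (1 - δ)) < lam k},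
            J T s ((1 - ε) * (s ^ (3 / (1 - δ)) - lam k) - s)
          ≤ C * s ^ (3 * (3 / (1 - δ)) / 4) := by
  obtain ⟨hpos, hmono, hasym⟩ := hlam
  obtain ⟨hε0, hε3⟩ := hε
  obtain ⟨hδ0, hδ4⟩ := hδ
  have hδ1 : (0:ℝ) < 1 - δ := by linarith
  have hε1 : (0:ℝ) < 1 - ε := by linarith
  have hL : (0:ℝ) < 3 / (1 - δ) := by positivity
  have hT₀3 : (0:ℝ) < T₀ ^ ((1:ℝ)/3) := Real.rpow_pos_of_pos hT₀ _
  have hπ : (0:ℝ) < Real.pi := Real.pi_pos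
  have hπ3 : (3:ℝ) < Real.pi := Real.pi_gt_three
  set γ : ℝ := (1 - ε) * T₀ ^ ((1:ℝ)/3) / 6 with hγdef
  have hγ : 0 < γ := by positivity
  set B : ℝ := (3 * Real.pi / 2) * (K + 1/4) with hBdef
  have hB : 0 < B := by positivity
  set Dr : ℝ := 2 * B + 3 * Real.pi / 2 with hDrdef
  have hDr : 0 < Dr := by positivity
  set D : ℕ := ⌈Dr⌉₊ with hDdef
  have hDrD : Dr ≤ D := Nat.le_ceil Dr
  set C : ℝ := (1/2) * Real.exp (γ * D) * (1 + 1/γ) + (((D:ℝ)+1)/2 + 27/γ^3) with hCdef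
  have hC : 0 < C := by positivity
  clear_value γ B Dr D C
  refine ⟨C, 1, hC, one_pos, ?_⟩
  intro s hs1 T hT
  have hs0 : (0:ℝ) < s := lt_of_lt_of_le one_pos hs1
  set a : ℝ := s ^ (3 / (1 - δ)) with hadef
  have ha1 : 1 ≤ a := Real.one_le_rpow hs1 hL.le
  have ha0 : (0:ℝ) < a := lt_of_lt_of_le one_pos ha1
  set q : ℝ := a ^ ((1:ℝ)/2) with hqdef
  have hq1 : 1 ≤ q := Real.one_le_rpow ha1 (by norm_num)
  have hq0 : (0:ℝ) < q := lt_of_lt_of_le one_pos hq1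
  set A : ℝ := a ^ ((3:ℝ)/2) with hAdef
  have hA0 : (0:ℝ) ≤ A := Real.rpow_nonneg ha0.le _
  set P : ℝ := s ^ (3 * (3 / (1 - δ)) / 4) with hPdef
  have hP1 : 1 ≤ P := Real.one_le_rpow hs1 (by positivity)
  have hqP : q ≤ P := by
    rw [hqdef, hadef, hPdef, ← Real.rpow_mul hs0.le]
    apply Real.rpow_le_rpow_of_exponent_le hs1
    linarith [hL.le]
  -- eigenvalue bounds
  have hbound : ∀ k : ℕ, 1 ≤ k →
      ((3*Real.pi/2)*(k:ℝ) - B ≤ (lam k) ^ ((3:ℝ)/2) ∧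
       (lam k) ^ ((3:ℝ)/2) ≤ (3*Real.pi/2)*(k:ℝ) + B) := by
    intro k hk1
    obtain ⟨R, hRk, hRpos, hlamk⟩ := hasym k hk1
    have hk0 : (1:ℝ) ≤ (k:ℝ) := by exact_mod_cast hk1
    have hRK : |R| ≤ K := le_trans hRk (div_le_self hK.le hk0)
    obtain ⟨hR1, hR2⟩ := abs_le.mp hRK
    have hfac : (0:ℝ) < 3*Real.pi/2 := by positivity
    have hbase : (0:ℝ) < 3 * Real.pi / 2 * ((k:ℝ) - 1/4 + R) := mul_pos (by positivity) hRpos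
    have h32 : (lam k) ^ ((3:ℝ)/2) = 3 * Real.pi / 2 * ((k:ℝ) - 1/4 + R) := by
      rw [hlamk, ← Real.rpow_mul hbase.le]
      rw [show (2:ℝ)/3 * (3/2) = 1 by norm_num, Real.rpow_one]
    constructor
    · rw [h32, hBdef]
      linarith [mul_nonneg hfac.le (by linarith : (0:ℝ) ≤ K + R), hπ.le]
    · rw [h32, hBdef]
      linarith [mul_nonneg hfac.le (by linarith : (0:ℝ) ≤ K - R), hπ.le]
  have hAlam : ∀ k : ℕ, 1 ≤ k → a < lam k → A < (lam k) ^ ((3:ℝ)/2) := by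
    intro k hk1 hka
    rw [hAdef]
    exact Real.rpow_lt_rpow ha0.le hka (by norm_num)
  set x₀ : ℝ := (A - B) / (3 * Real.pi / 2) with hx₀def
  set m₀ : ℕ := ⌊max x₀ 0⌋₊ with hm₀def
  have hm₀S : ∀ k : ℕ, 1 ≤ k → a < lam k → m₀ < k := by
    intro k hk1 hka
    have h1 := (hbound k hk1).2
    have h2 := hAlam k hk1 hka
    have hk0 : (0:ℝ) < (k:ℝ) := by exact_mod_cast hk1
    have hx₀k : x₀ < (k:ℝ) := by
      rw [hx₀def, div_lt_iff₀ (by positivity)]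
      linarith
    have hmax : max x₀ 0 < (k:ℝ) := max_lt hx₀k hk0
    exact (Nat.floor_lt (le_max_right _ _)).mpr hmax
  have hT3 : T₀ ^ ((1:ℝ)/3) ≤ T ^ ((1:ℝ)/3) := Real.rpow_le_rpow hT₀.le hT (by norm_num)
  clear_value a q A P x₀ m₀
  -- the key pointwise bound
  have hkey : ∀ k : ℕ, 1 ≤ k → a < lam k →
      J T s ((1 - ε) * (a - lam k) - s) ≤
        (1/2) * Real.exp (-(γ * max (((k - m₀ : ℕ):ℝ) - D) 0 / q))
        + (1/2) * Real.exp (-(γ * (max (((k - m₀:ℕ):ℝ) - D) 0) ^ ((2:ℝ)/3))) := by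
    intro k hk1 hka
    have hm₀k := hm₀S k hk1 hka
    have hcast : ((k - m₀ : ℕ):ℝ) = (k:ℝ) - (m₀:ℝ) := by
      rw [Nat.cast_sub hm₀k.le]
    set u : ℝ := max (((k - m₀:ℕ):ℝ) - D) 0 with hudef
    have hu0 : 0 ≤ u := le_max_right _ _
    set d : ℝ := lam k - a with hddef
    have hd0 : 0 < d := by rw [hddef]; linarith
    set t : ℝ := (lam k) ^ ((3:ℝ)/2) - A with htdef
    have ht0 : 0 < t := by rw [htdef]; linarith [hAlam k hk1 hka]
    clear_value u d t
    have hm₀x : x₀ - 1 < (m₀:ℝ) := by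
      have h1 := Nat.lt_floor_add_one (max x₀ 0)
      have h2 : x₀ ≤ max x₀ 0 := le_max_left _ _
      rw [hm₀def]
      push_cast
      push_cast at h1
      linarith
    have hut : u ≤ t := by
      have hlow := (hbound k hk1).1
      have hfac : (0:ℝ) < 3*Real.pi/2 := by positivity
      have hx₀eq : (3*Real.pi/2) * x₀ = A - B := by
        rw [hx₀def]
        field_simp
      have hm₀kR : (m₀:ℝ) ≤ (k:ℝ) := by exact_mod_cast hm₀k.le
      have hkj : (k:ℝ) - m₀ + x₀ - 1 < (k:ℝ) := by linarith
      have hmul : (3*Real.pi/2) * ((k:ℝ) - m₀ + x₀ - 1) ≤ (3*Real.pi/2) * (k:ℝ) :=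
        mul_le_mul_of_nonneg_left hkj.le hfac.le
      have hjt : (3*Real.pi/2) * ((k:ℝ) - m₀) - Dr ≤ t := by
        rw [htdef, hDrdef]
        linarith [hmul, hx₀eq, hlow]
      have hjD : (k:ℝ) - m₀ - (D:ℝ) ≤ t := by
        have hcnn : (0:ℝ) ≤ (k:ℝ) - m₀ := by linarith
        have h1 : (k:ℝ) - m₀ ≤ (3*Real.pi/2) * ((k:ℝ) - m₀) := by
          linarith [mul_nonneg hcnn (show (0:ℝ) ≤ 3*Real.pi/2 - 1 by linarith)]
        linarith [hDrD]
      rw [hudef, hcast]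
      exact max_le hjD ht0.le
    -- J bound via log(1+e^z) ≤ e^z
    have hJ : J T s ((1 - ε) * (a - lam k) - s) ≤ (1/2) * Real.exp (-(6 * γ * d)) := by
      simp only [J]
      have harg : (1 - ε) * (a - lam k) - s + s = -((1-ε) * d) := by rw [hddef]; ring
      rw [harg]
      set z : ℝ := T ^ ((1:ℝ)/3) * -((1-ε)*d) with hzdef
      have hlog : Real.log (1 + Real.exp z) ≤ Real.exp z := by
        have h := Real.log_le_sub_one_of_pos (by positivity : (0:ℝ) < 1 + Real.exp z)
        linarith
      have hz6 : z ≤ -(6*γ*d) := by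
        have h6γ : 6*γ = (1-ε) * T₀ ^ ((1:ℝ)/3) := by rw [hγdef]; ring
        have hmul := mul_le_mul_of_nonneg_right hT3
          (by positivity : (0:ℝ) ≤ (1-ε)*d)
        rw [hzdef, h6γ]
        linarith [hmul]
      have hexp : Real.exp z ≤ Real.exp (-(6*γ*d)) := Real.exp_le_exp.mpr hz6
      linarith
    have hlam0 : (0:ℝ) < lam k := hpos k hk1
    have ht3 : t ≤ 3 * (lam k) ^ ((1:ℝ)/2) * d := by
      have h := rpow32_sub_le a (lam k) ha0.le hka.le
      rw [htdef, hddef, hAdef]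
      exact h
    have hsqrt : (lam k) ^ ((1:ℝ)/2) ≤ q + t ^ ((1:ℝ)/3) := by
      have h1 : (lam k) ^ ((1:ℝ)/2) = ((lam k) ^ ((3:ℝ)/2)) ^ ((1:ℝ)/3) := by
        rw [← Real.rpow_mul hlam0.le]; norm_num
      have h2 : (lam k) ^ ((3:ℝ)/2) = A + t := by rw [htdef]; ring
      have h3 : A ^ ((1:ℝ)/3) = q := by
        rw [hAdef, hqdef, ← Real.rpow_mul ha0.le]; norm_num
      rw [h1, h2, ← h3]
      exact cbrt_add_le A t hA0 ht0.le
    have hlamsq : (0:ℝ) ≤ (lam k) ^ ((1:ℝ)/2) := Real.rpow_nonneg hlam0.le _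
    have hmain : Real.exp (-(6 * γ * d)) ≤
        Real.exp (-(γ * u / q)) + Real.exp (-(γ * u ^ ((2:ℝ)/3))) := by
      by_cases hcase : t ^ ((1:ℝ)/3) ≤ q
      · have hl2q : (lam k) ^ ((1:ℝ)/2) ≤ 2*q := by linarith
        have h1 : t ≤ 6 * q * d := by
          linarith [mul_le_mul_of_nonneg_right hl2q hd0.le, ht3]
        have h2 : γ * u / q ≤ 6 * γ * d := by
          rw [div_le_iff₀ hq0]
          linarith [mul_le_mul_of_nonneg_left (le_trans hut h1) hγ.le]
        calc Real.exp (-(6*γ*d)) ≤ Real.exp (-(γ*u/q)) := Real.exp_le_exp.mpr (by linarith)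
          _ ≤ _ := le_add_of_nonneg_right (Real.exp_pos _).le
      · push_neg at hcase
        have ht13 : 0 < t ^ ((1:ℝ)/3) := Real.rpow_pos_of_pos ht0 _
        have hl2t : (lam k) ^ ((1:ℝ)/2) ≤ 2 * t ^ ((1:ℝ)/3) := by linarith
        have h1 : t ≤ 6 * t ^ ((1:ℝ)/3) * d := by
          linarith [mul_le_mul_of_nonneg_right hl2t hd0.le, ht3]
        have h23 : t ^ ((2:ℝ)/3) * t ^ ((1:ℝ)/3) = t := by
          rw [← Real.rpow_add ht0]; norm_num
        have h2 : t ^ ((2:ℝ)/3) ≤ 6 * d := by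
          have hstep : t ^ ((2:ℝ)/3) * t ^ ((1:ℝ)/3) ≤ (6 * d) * t ^ ((1:ℝ)/3) := by
            rw [h23]
            calc t ≤ 6 * t ^ ((1:ℝ)/3) * d := h1
              _ = (6 * d) * t ^ ((1:ℝ)/3) := by ring
          exact le_of_mul_le_mul_right hstep ht13
        have hu23 : u ^ ((2:ℝ)/3) ≤ t ^ ((2:ℝ)/3) := Real.rpow_le_rpow hu0 hut (by norm_num)
        have h3 : γ * u ^ ((2:ℝ)/3) ≤ 6 * γ * d := by
          linarith [mul_le_mul_of_nonneg_left (le_trans hu23 h2) hγ.le]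
        calc Real.exp (-(6*γ*d)) ≤ Real.exp (-(γ * u ^ ((2:ℝ)/3))) :=
              Real.exp_le_exp.mpr (by linarith)
          _ ≤ _ := le_add_of_nonneg_left (Real.exp_pos _).le
    calc J T s ((1 - ε) * (a - lam k) - s) ≤ (1/2) * Real.exp (-(6*γ*d)) := hJ
      _ ≤ (1/2) * Real.exp (-(γ * u / q)) + (1/2) * Real.exp (-(γ * u ^ ((2:ℝ)/3))) := by
          linarith
  -- assemble
  obtain ⟨hg1sum, hg1bound⟩ := g1_bound γ q hγ hq1 D
  obtain ⟨hg2sum, hg2bound⟩ := g2_bound γ hγ D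
  have hgsum : Summable (fun j : ℕ =>
      (1/2) * Real.exp (-(γ * max ((j:ℝ) - D) 0 / q))
      + (1/2) * Real.exp (-(γ * (max ((j:ℝ) - D) 0) ^ ((2:ℝ)/3)))) := hg1sum.add hg2sum
  set ι : {k : ℕ // 1 ≤ k ∧ a < lam k} → ℕ := fun k => k.1 - m₀ with hιdef
  have hιinj : Function.Injective ι := by
    intro k k' h
    have h1 := hm₀S k.1 k.2.1 k.2.2
    have h2 := hm₀S k'.1 k'.2.1 k'.2.2
    apply Subtype.ext
    simp only [hιdef] at h
    omega
  have hFle : ∀ k : {k : ℕ // 1 ≤ k ∧ a < lam k},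
      J T s ((1 - ε) * (a - lam k) - s) ≤
        (1/2) * Real.exp (-(γ * max (((ι k):ℝ) - D) 0 / q))
        + (1/2) * Real.exp (-(γ * (max (((ι k):ℝ) - D) 0) ^ ((2:ℝ)/3))) :=
    fun k => hkey k.1 k.2.1 k.2.2
  have hF0 : ∀ k : {k : ℕ // 1 ≤ k ∧ a < lam k},
      0 ≤ J T s ((1 - ε) * (a - lam k) - s) := by
    intro k
    simp only [J]
    have hlog : (0:ℝ) ≤ Real.log (1 + Real.exp (T ^ ((1:ℝ)/3) * ((1 - ε) * (a - lam k) - s + s))) := by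
      apply Real.log_nonneg
      linarith [Real.exp_pos (T ^ ((1:ℝ)/3) * ((1 - ε) * (a - lam k) - s + s))]
    linarith
  have hFsum : Summable (fun k : {k : ℕ // 1 ≤ k ∧ a < lam k} =>
      J T s ((1 - ε) * (a - lam k) - s)) :=
    Summable.of_nonneg_of_le hF0 hFle (hgsum.comp_injective hιinj)
  refine ⟨hFsum, ?_⟩
  have h1 : ∑' k : {k : ℕ // 1 ≤ k ∧ a < lam k}, J T s ((1 - ε) * (a - lam k) - s)
      ≤ ∑' j : ℕ, ((1/2) * Real.exp (-(γ * max ((j:ℝ) - D) 0 / q))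
        + (1/2) * Real.exp (-(γ * (max ((j:ℝ) - D) 0) ^ ((2:ℝ)/3)))) :=
    Summable.tsum_le_tsum_of_inj ι hιinj (fun c _ => by positivity) hFle hFsum hgsum
  have h2 : ∑' j : ℕ, ((1/2) * Real.exp (-(γ * max ((j:ℝ) - D) 0 / q))
        + (1/2) * Real.exp (-(γ * (max ((j:ℝ) - D) 0) ^ ((2:ℝ)/3))))
      = (∑' j : ℕ, (1/2) * Real.exp (-(γ * max ((j:ℝ) - D) 0 / q)))
        + ∑' j : ℕ, (1/2) * Real.exp (-(γ * (max ((j:ℝ) - D) 0) ^ ((2:ℝ)/3))) :=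
    Summable.tsum_add hg1sum hg2sum
  have hE : (0:ℝ) < Real.exp (γ * D) := Real.exp_pos _
  have hfin : (1/2) * Real.exp (γ * D) * (1 + q/γ) + (((D:ℝ)+1)/2 + 27/γ^3) ≤ C * P := by
    rw [hCdef]
    have hqγ : q/γ ≤ P/γ := by gcongr
    have hh1 : 1 + q/γ ≤ (1 + 1/γ) * P := by
      have hexp1 : (1 + 1/γ) * P = P + P * (1/γ) := by ring
      rw [hexp1]
      have : P * (1/γ) = P/γ := by ring
      rw [this]
      linarith
    have hh2 : (1/2) * Real.exp (γ * D) * (1 + q/γ)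
        ≤ (1/2) * Real.exp (γ * D) * ((1 + 1/γ) * P) := by
      apply mul_le_mul_of_nonneg_left hh1 (by positivity)
    have hh3 : ((D:ℝ)+1)/2 + 27/γ^3 ≤ (((D:ℝ)+1)/2 + 27/γ^3) * P := by
      linarith [mul_le_mul_of_nonneg_left hP1
        (by positivity : (0:ℝ) ≤ ((D:ℝ)+1)/2 + 27/γ^3)]
    linarith [hh2, hh3]
  calc ∑' k : {k : ℕ // 1 ≤ k ∧ a < lam k}, J T s ((1 - ε) * (a - lam k) - s)
      ≤ (∑' j : ℕ, (1/2) * Real.exp (-(γ * max ((j:ℝ) - D) 0 / q)))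
        + ∑' j : ℕ, (1/2) * Real.exp (-(γ * (max ((j:ℝ) - D) 0) ^ ((2:ℝ)/3))) := by
        rw [← h2]; exact h1
    _ ≤ (1/2) * Real.exp (γ * D) * (1 + q/γ) + (((D:ℝ)+1)/2 + 27/γ^3) :=
        add_le_add hg1bound hg2bound
    _ ≤ C * P := hfin
end

section
/- Fix ε ∈ (0,1/3) and s > 0. Let (a_k)_{k≥1} be a nonincreasing sequence of reals and let (λ_k)_{k≥1} be a nondecreasing sequence of positive reals tending to +∞. Set θ₀ := ⌊2 s^{3/2}/(3π)⌋ and assume θ₀ ≥ 1 and λ_{θ₀} < s. For each integer j ≥ 2 let q_j := −(j−1)·ε·s/2, p_j := −j·ε·s/2, and k_j := #{ n ≥ 1 : −λ_n ≥ q_j } (a finite number). If there exists k ∈ {1, …, θ₀} with −λ_k − a_k ≥ ε·s, then there exists j ∈ {2, …, ⌈2/ε⌉ + 1} such that k_j ≥ 1 and a_{k_j} ≤ p_j. -/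
theorem deviation_forces_block_drop (ε s : ℝ) (hε : ε ∈ Set.Ioo (0:ℝ) (1/3)) (hs : 0 < s)
    (a lam : ℕ → ℝ)
    (ha : ∀ j k : ℕ, 1 ≤ j → j ≤ k → a k ≤ a j)
    (hlam_pos : ∀ n : ℕ, 1 ≤ n → 0 < lam n)
    (hlam_mono : ∀ j k : ℕ, 1 ≤ j → j ≤ k → lam j ≤ lam k)
    (hlam_tendsto : Filter.Tendsto lam Filter.atTop Filter.atTop)
    (hθ₀ : 1 ≤ ⌊2 * s ^ ((3:ℝ)/2) / (3 * Real.pi)⌋₊)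
    (hlam_theta : lam ⌊2 * s ^ ((3:ℝ)/2) / (3 * Real.pi)⌋₊ < s)
    (hdev : ∃ k : ℕ, 1 ≤ k ∧ k ≤ ⌊2 * s ^ ((3:ℝ)/2) / (3 * Real.pi)⌋₊ ∧
      ε * s ≤ -lam k - a k) :
    ∃ j : ℕ, 2 ≤ j ∧ j ≤ ⌈2 / ε⌉₊ + 1 ∧
      1 ≤ Nat.card {n : ℕ | 1 ≤ n ∧ -((j : ℝ) - 1) * ε * s / 2 ≤ -lam n} ∧
      a (Nat.card {n : ℕ | 1 ≤ n ∧ -((j : ℝ) - 1) * ε * s / 2 ≤ -lam n})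
        ≤ -(j : ℝ) * ε * s / 2 := by
  obtain ⟨hε0, hε3⟩ := hε
  obtain ⟨k, hk1, hkθ, hdev⟩ := hdev
  have hlamk_pos : 0 < lam k := hlam_pos k hk1
  have hlamks : lam k < s :=
    lt_of_le_of_lt (hlam_mono k _ hk1 hkθ) hlam_theta
  have hεs : 0 < ε * s := mul_pos hε0 hs
  set m : ℕ := ⌈2 * lam k / (ε * s)⌉₊ with hm
  have hx_pos : 0 < 2 * lam k / (ε * s) := by positivity
  have hm1 : 1 ≤ m := Nat.one_le_iff_ne_zero.mpr (by
    simp [hm, Nat.ceil_eq_zero, not_le, hx_pos])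
  have hmx : 2 * lam k / (ε * s) ≤ (m : ℝ) := Nat.le_ceil _
  have hmx' : (m : ℝ) < 2 * lam k / (ε * s) + 1 := Nat.ceil_lt_add_one hx_pos.le
  have hlamk_le : lam k ≤ (m : ℝ) * ε * s / 2 := by
    rw [div_le_iff₀ hεs] at hmx
    nlinarith
  have hml : ((m : ℝ) - 1) * ε * s / 2 < lam k := by
    have h2 : ((m : ℝ) - 1) * (ε * s) < 2 * lam k := by
      rw [← lt_div_iff₀ hεs]; linarith
    nlinarith
  refine ⟨m + 1, by omega, ?_, ?_, ?_⟩
  · have : m ≤ ⌈2 / ε⌉₊ := by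
      apply Nat.ceil_le_ceil
      rw [div_le_div_iff₀ hεs hε0]
      nlinarith
    omega
  all_goals {
    have hset : {n : ℕ | 1 ≤ n ∧ -(((m + 1 : ℕ) : ℝ) - 1) * ε * s / 2 ≤ -lam n}
        = {n : ℕ | 1 ≤ n ∧ lam n ≤ (m : ℝ) * ε * s / 2} := by
      ext n
      simp only [Set.mem_setOf_eq]
      constructor <;> rintro ⟨h1, h2⟩ <;> refine ⟨h1, by push_cast at h2 ⊢; linarith⟩
    rw [hset]
    set S : Set ℕ := {n : ℕ | 1 ≤ n ∧ lam n ≤ (m : ℝ) * ε * s / 2} with hS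
    obtain ⟨N, hN⟩ := Filter.eventually_atTop.mp
      (hlam_tendsto.eventually_gt_atTop ((m : ℝ) * ε * s / 2))
    have hfin : S.Finite := by
      apply Set.Finite.subset (Set.finite_Iio N)
      intro n hn
      simp only [Set.mem_Iio]
      by_contra hc
      exact absurd hn.2 (not_le.mpr (hN n (le_of_not_gt hc)))
    have hsub : Set.Icc 1 k ⊆ S := by
      intro n hn
      obtain ⟨hn1, hnk⟩ := hn
      exact ⟨hn1, le_trans (hlam_mono n k hn1 hnk) hlamk_le⟩
    have hcard : k ≤ Nat.card S := by
      rw [Nat.card_coe_set_eq]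
      calc k = (Set.Icc 1 k).ncard := by
              rw [show (Set.Icc 1 k : Set ℕ) = ↑(Finset.Icc 1 k) from (Finset.coe_Icc 1 k).symm,
                Set.ncard_coe_finset, Nat.card_Icc]; omega
        _ ≤ S.ncard := Set.ncard_le_ncard hsub hfin
    first
    | exact le_trans hk1 hcard
    | · calc a (Nat.card S) ≤ a k := ha k _ hk1 hcard
          _ ≤ -lam k - ε * s := by linarith
          _ ≤ -((m + 1 : ℕ) : ℝ) * ε * s / 2 := by push_cast; nlinarith
  }
end
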